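/- Let X be any normed space, let d ≥ 4 be an integer, let q ∈ [1,∞), and let p = log(5/2)/log 2. Then m(ℓ_p^d ⊕_q X) ≤ 6. -/

import Mathlib

/-- A set `A` in a normed space is `lam`-equilateral if `lam > 0` and the distance
between any two distinct points of `A` equals `lam`. -/
def EquilateralWith {E : Type*} [NormedAddCommGroup E] (A : Set E) (lam : ℝ) : Prop :=
  0 < lam ∧ A.Pairwise fun x y => ‖x - y‖ = lam

/-- A set is equilateral if it is `lam`-equilateral for some `lam > 0`. -/
def Equilateral {E : Type*} [NormedAddCommGroup E] (A : Set E) : Prop :=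
  ∃ lam : ℝ, EquilateralWith A lam

/-- An equilateral set is maximal if it is not properly contained in any equilateral set. -/
def MaximalEquilateral {E : Type*} [NormedAddCommGroup E] (A : Set E) : Prop :=
  Equilateral A ∧ ∀ B : Set E, Equilateral B → A ⊆ B → B = A

/-!
An equilateral set with no equidistant point (no centre of a sphere through all of its points) is
maximal, since any point added to it would be such a centre. Both properties pass from `A ⊆ Y` to
`A × {0} ⊆ Y ⊕_q X`, because `‖(y, x) - (a, 0)‖` is an increasing function of `‖y - a‖`, and they
are preserved by isometries. As `ℓ_p^d ≅ ℓ_p^4 ⊕_p ℓ_p^(d-4)`, it is enough to find six such points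
in `ℓ_p^4`. Take `0`, `2e₁` and `e₁ + c(±1, 0, ±1, ±1)` with an even number of minus signs, where
`|c|^p = 1/2`: since `2^p = 5/2` all their distances are `2`. Comparing opposite pairs shows that
an equidistant point would have to be `e₁`; but the `p`-th powers of its distances to `0` and to
`e₁ + c(1, 0, 1, 1)` are `1` and `3/2`.
-/

open scoped ENNReal

section General

variable {E F : Type*} [NormedAddCommGroup E] [NormedAddCommGroup F]

def NoEquidistantPoint (A : Set E) : Prop :=
  ∀ (z : E) (r : ℝ), ¬ ∀ a ∈ A, ‖z - a‖ = r

theorem MaximalEquilateral.of_noEquidistantPoint {A : Set E} (hA : Equilateral A)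
    (h : NoEquidistantPoint A) : MaximalEquilateral A := by
  refine ⟨hA, fun B ⟨r, _, hB⟩ hAB => (Set.Subset.antisymm (fun z hz => ?_) hAB)⟩
  by_contra hzA
  exact h z r fun a ha => hB hz (hAB ha) (ne_of_mem_of_not_mem ha hzA).symm

theorem EquilateralWith.image {A : Set E} {r : ℝ} (hA : EquilateralWith A r) {f : E → F}
    (hf : Isometry f) : EquilateralWith (f '' A) r := by
  refine ⟨hA.1, ?_⟩
  rintro _ ⟨x, hx, rfl⟩ _ ⟨y, hy, rfl⟩ hxy
  rw [← dist_eq_norm, hf.dist_eq, dist_eq_norm]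
  exact hA.2 hx hy (ne_of_apply_ne f hxy)

theorem NoEquidistantPoint.image {A : Set E} (hA : NoEquidistantPoint A) (e : E ≃ᵢ F) :
    NoEquidistantPoint (e '' A) := by
  intro z r hz
  refine hA (e.symm z) r fun a ha => ?_
  rw [← dist_eq_norm, ← e.dist_eq, e.apply_symm_apply, dist_eq_norm]
  exact hz _ (Set.mem_image_of_mem e ha)

end General

section ProdLp

variable {Y X : Type*} [NormedAddCommGroup Y] [NormedAddCommGroup X] (q : ℝ≥0∞) [Fact (1 ≤ q)]

theorem WithLp.isometry_toLp_inl : Isometry fun y : Y => WithLp.toLp q (y, (0 : X)) :=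
  Isometry.of_dist_eq fun y y' => by
    rw [dist_eq_norm, dist_eq_norm, ← WithLp.toLp_sub, Prod.mk_sub_mk, sub_zero,
      WithLp.norm_toLp_fst]

theorem NoEquidistantPoint.image_toLp_inl {A : Set Y} (hA : NoEquidistantPoint A)
    (hq : q ≠ ∞) : NoEquidistantPoint ((fun y : Y => WithLp.toLp q (y, (0 : X))) '' A) := by
  have hq0 : 0 < q.toReal := ENNReal.toReal_pos (zero_lt_one.trans_le Fact.out).ne' hq
  intro z r hz
  refine hA z.fst ((r ^ q.toReal - ‖z.snd‖ ^ q.toReal) ^ q.toReal⁻¹) fun a ha => ?_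
  have hza := hz _ (Set.mem_image_of_mem _ ha)
  have hr : 0 ≤ r := hza ▸ norm_nonneg _
  rw [WithLp.prod_norm_eq_add hq0] at hza
  simp only [WithLp.sub_fst, WithLp.sub_snd, WithLp.toLp_fst, WithLp.toLp_snd, sub_zero] at hza
  rw [one_div, Real.rpow_inv_eq (by positivity) hr hq0.ne'] at hza
  rw [← hza, add_sub_cancel_right, Real.rpow_rpow_inv (norm_nonneg _) hq0.ne']

end ProdLp

theorem eq_midpoint_of_abs_sub_rpow_eq {p x a b : ℝ} (hp : p ≠ 0) (hab : a ≠ b)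
    (h : |x - a| ^ p = |x - b| ^ p) : x = (a + b) / 2 := by
  rcases abs_eq_abs.mp ((Real.rpow_left_inj (abs_nonneg _) (abs_nonneg _) hp).mp h) with h | h
  · exact absurd (by linarith) hab
  · linarith

theorem PiLp.norm_eq_iff_sum_rpow_eq {ι : Type*} [Fintype ι] {β : ι → Type*}
    [∀ i, SeminormedAddCommGroup (β i)] {p : ℝ≥0∞} (hp : 0 < p.toReal) (f : PiLp p β) {r : ℝ}
    (hr : 0 ≤ r) : ‖f‖ = r ↔ ∑ i, ‖f i‖ ^ p.toReal = r ^ p.toReal := by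
  rw [PiLp.norm_eq_sum hp, one_div, Real.rpow_inv_eq (by positivity) hr hp.ne']

section SixPoints

variable (p : ℝ≥0∞) (c : ℝ)

noncomputable def sixPoints : Fin 6 → PiLp p (fun _ : Fin 4 => ℝ) :=
  ![WithLp.toLp p ![0, 0, 0, 0], WithLp.toLp p ![0, 2, 0, 0],
    WithLp.toLp p ![c, 1, c, c], WithLp.toLp p ![c, 1, -c, -c],
    WithLp.toLp p ![-c, 1, c, -c], WithLp.toLp p ![-c, 1, -c, c]]

variable {p c} [Fact (1 ≤ p)] (h2 : (2 : ℝ) ^ p.toReal = 5 / 2) (hc : |c| ^ p.toReal = 1 / 2)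
include h2 hc

theorem equilateralWith_range_sixPoints : EquilateralWith (Set.range (sixPoints p c)) 2 := by
  have hp : 0 < p.toReal :=
    (Real.rpow_lt_rpow_left_iff one_lt_two).mp (by rw [Real.rpow_zero, h2]; norm_num)
  have h2c : |c + c| ^ p.toReal = 5 / 4 := by
    rw [← two_mul, abs_mul, Real.mul_rpow (abs_nonneg _) (abs_nonneg _), abs_two, h2, hc]
    norm_num
  have h2c' : |-c - c| ^ p.toReal = 5 / 4 := by rw [← neg_add', abs_neg, h2c]
  have h2c'' : |-c + -c| ^ p.toReal = 5 / 4 := by rw [← neg_add, abs_neg, h2c]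
  refine ⟨two_pos, ?_⟩
  rintro _ ⟨i, rfl⟩ _ ⟨j, rfl⟩ hij
  rw [PiLp.norm_eq_iff_sum_rpow_eq hp _ zero_le_two, h2]
  fin_cases i <;> fin_cases j <;> first
    | exact absurd rfl hij
    | simp only [sixPoints, Fin.sum_univ_four, PiLp.sub_apply, Real.norm_eq_abs, Fin.reduceFinMk,
        Fin.zero_eta, Fin.mk_one, Fin.isValue, Matrix.cons_val, Matrix.cons_val_zero,
        Matrix.cons_val_one]
      norm_num [Real.zero_rpow hp.ne', h2, hc, h2c, h2c', h2c'']

theorem noEquidistantPoint_range_sixPoints : NoEquidistantPoint (Set.range (sixPoints p c)) := by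
  have hp : 0 < p.toReal :=
    (Real.rpow_lt_rpow_left_iff one_lt_two).mp (by rw [Real.rpow_zero, h2]; norm_num)
  have hc0 : c ≠ -c := by
    intro h
    rw [self_eq_neg.mp h, abs_zero, Real.zero_rpow hp.ne'] at hc
    norm_num at hc
  intro z r hz
  have hr : 0 ≤ r := hz _ ⟨0, rfl⟩ ▸ norm_nonneg _
  have hS (k : Fin 6) : ∑ i, |z i - sixPoints p c k i| ^ p.toReal = r ^ p.toReal :=
    (PiLp.norm_eq_iff_sum_rpow_eq hp _ hr).mp (hz _ ⟨k, rfl⟩)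
  have e01 := (hS 0).trans (hS 1).symm
  have e25 := (hS 2).trans (hS 5).symm
  have e34 := (hS 3).trans (hS 4).symm
  have e23 := (hS 2).trans (hS 3).symm
  have e02 := (hS 0).trans (hS 2).symm
  simp only [sixPoints, Fin.sum_univ_four, PiLp.toLp_apply, Matrix.cons_val] at e01 e25 e34 e23 e02
  have hz1 : z 1 = 1 := by
    simpa using eq_midpoint_of_abs_sub_rpow_eq hp.ne' two_ne_zero.symm (by linarith)
  have hz0 : z 0 = 0 := by
    simpa using eq_midpoint_of_abs_sub_rpow_eq hp.ne' hc0 (by linarith)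
  have hz2 : z 2 = 0 := by
    simpa using eq_midpoint_of_abs_sub_rpow_eq hp.ne' hc0 (by linarith)
  have hz3 : z 3 = 0 := by
    simpa using eq_midpoint_of_abs_sub_rpow_eq hp.ne' hc0 (by linarith)
  rw [hz0, hz1, hz2, hz3] at e02
  norm_num [Real.zero_rpow hp.ne', hc] at e02

end SixPoints

theorem Set.ncard_range_le {α β : Type*} [Finite α] (f : α → β) :
    (Set.range f).ncard ≤ Nat.card α :=
  Nat.card_coe_set_eq (Set.range f) ▸ Finite.card_range_le f

noncomputable def PiLp.prodEquivOfAddEq (p : ℝ≥0∞) [Fact (1 ≤ p)] {m k n : ℕ} (h : m + k = n) :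
    WithLp p (PiLp p (fun _ : Fin m => ℝ) × PiLp p (fun _ : Fin k => ℝ)) ≃ₗᵢ[ℝ]
      PiLp p (fun _ : Fin n => ℝ) :=
  (PiLp.sumPiLpEquivProdLpPiLp p fun _ => ℝ).symm.trans
    (LinearIsometryEquiv.piLpCongrLeft p ℝ ℝ (finSumFinEquiv.trans (finCongr h)))

theorem exists_maximalEquilateral_ncard_le_six (X : Type*) [NormedAddCommGroup X] {d : ℕ}
    (hd : 4 ≤ d) (p q : ℝ≥0∞) [Fact (1 ≤ p)] [Fact (1 ≤ q)] (h2 : (2 : ℝ) ^ p.toReal = 5 / 2)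
    (hq : q ≠ ∞) :
    ∃ A : Set (WithLp q ((PiLp p fun _ : Fin d => ℝ) × X)),
      MaximalEquilateral A ∧ A.Finite ∧ A.ncard ≤ 6 := by
  have hp : p ≠ ∞ := by
    rintro rfl
    norm_num at h2
  set c : ℝ := (1 / 2) ^ p.toReal⁻¹
  have hc : |c| ^ p.toReal = 1 / 2 := by
    rw [abs_of_nonneg (by positivity), Real.rpow_inv_rpow (by norm_num)
      (ENNReal.toReal_pos (zero_lt_one.trans_le Fact.out).ne' hp).ne']
  let e := PiLp.prodEquivOfAddEq p (show 4 + (d - 4) = d by omega)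
  let F := (fun y => WithLp.toLp q (y, (0 : X))) ∘ e ∘
    (fun y => WithLp.toLp p (y, (0 : PiLp p fun _ : Fin (d - 4) => ℝ))) ∘ sixPoints p c
  refine ⟨Set.range F, .of_noEquidistantPoint ⟨2, ?_⟩ ?_, Set.finite_range F,
    Set.ncard_range_le F |>.trans_eq (Nat.card_fin 6)⟩
  · simp only [F, Set.range_comp]
    exact (((equilateralWith_range_sixPoints h2 hc).image (WithLp.isometry_toLp_inl p)).image
      e.isometry).image (WithLp.isometry_toLp_inl q)
  · simp only [F, Set.range_comp]
    exact (((noEquidistantPoint_range_sixPoints h2 hc).image_toLp_inl p hp).image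
      e.toIsometryEquiv).image_toLp_inl q hq

/-- Let `X` be any normed space, `d ≥ 4`, `q ∈ [1, ∞)`, and
`p = log(5/2)/log 2`. Then `m(ℓ_p^d ⊕_q X) ≤ 6`. -/
theorem statement11 (X : Type*) [NormedAddCommGroup X]
    (d : ℕ) (hd : 4 ≤ d) (q : ℝ) (hq : 1 ≤ q)
    (p : ℝ) (hp : p = Real.log (5 / 2) / Real.log 2) :
    letI : Fact (1 ≤ ENNReal.ofReal p) := ⟨ENNReal.one_le_ofReal.mpr (by
      rw [hp, le_div_iff₀ (Real.log_pos (by norm_num))]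
      simpa using Real.log_le_log (by norm_num) (by norm_num : (2 : ℝ) ≤ 5 / 2))⟩
    letI : Fact (1 ≤ ENNReal.ofReal q) := ⟨ENNReal.one_le_ofReal.mpr hq⟩
    ∃ A : Set (WithLp (ENNReal.ofReal q)
        ((PiLp (ENNReal.ofReal p) fun _ : Fin d => ℝ) × X)),
      MaximalEquilateral A ∧ A.Finite ∧ A.ncard ≤ 6 := by
  have hp1 : 1 ≤ p := by
    rw [hp, le_div_iff₀ (Real.log_pos one_lt_two), one_mul]
    exact Real.log_le_log two_pos (by norm_num)
  have : Fact (1 ≤ ENNReal.ofReal p) := ⟨ENNReal.one_le_ofReal.mpr hp1⟩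
  have : Fact (1 ≤ ENNReal.ofReal q) := ⟨ENNReal.one_le_ofReal.mpr hq⟩
  have h2 : (2 : ℝ) ^ (ENNReal.ofReal p).toReal = 5 / 2 := by
    rw [ENNReal.toReal_ofReal (by linarith), hp, Real.log_div_log,
      Real.rpow_logb two_pos (by norm_num) (by norm_num)]
  exact exists_maximalEquilateral_ncard_le_six X hd _ _ h2 ENNReal.ofReal_ne_top
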